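/- arXiv:1409.4461 — 2 statements merged into one kernel-verified Lean document; each statement's English description precedes it below -/
import Mathlib

section
/- Let V ⊆ ℝⁿ be a linear subspace, σ ∈ {+1, -1}ⁿ a sign vector, and c ∈ ℝⁿ. Consider the polyhedral cone K_σ = { x ∈ V : σ_i x_i ≥ 0 for all i }. Then the linear functional x ↦ ⟨c, x⟩ is bounded above on K_σ if and only if there exists y ∈ c + V^⊥ with σ_i y_i ≤ 0 for all i. Moreover, boundedness above on the cone K_σ is equivalent to ⟨c, x⟩ ≤ 0 for all x ∈ K_σ. -/
/-!
`K_σ` is the cone of `x ∈ V` with `⟪σᵢ eᵢ, x⟫ ≥ 0`, so the claim is Farkas' lemma for a polyhedral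
cone inside a subspace. After the orthogonal projection `P` onto `V`, it says that `-P c` lies in
the cone generated by the `P (σᵢ eᵢ)`. Finitely generated cones are closed: by the conic
Carathéodory theorem such a cone is a finite union of cones over linearly independent families,
i.e. of images of the closed orthant under closed embeddings. Hence the hyperplane separation
theorem for closed cones applies. Finally, a linear functional is bounded above on a cone iff it
is nonpositive there, by scaling.
-/

open Function Set
open scoped RealInnerProductSpace

lemma exists_nonneg_sub_smul_support_ssubset {ι : Type*} [Fintype ι] {a g : ι → ℝ} (ha : 0 ≤ a)
    (hg : g ≠ 0) (hga : support g ⊆ support a) :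
    ∃ t : ℝ, 0 ≤ a - t • g ∧ support (a - t • g) ⊂ support a := by
  wlog hpos : ∃ i, 0 < g i generalizing g
  · have hneg : ∃ i, 0 < (-g) i := by
      push Not at hpos
      obtain ⟨i, hi⟩ := Function.ne_iff.mp hg
      exact ⟨i, neg_pos.mpr ((hpos i).lt_of_ne hi)⟩
    obtain ⟨t, ht⟩ := this (neg_ne_zero.mpr hg) (by rwa [support_neg]) hneg
    exact ⟨-t, by simpa using ht⟩
  classical
  obtain ⟨i₀, hi₀, hmin⟩ := (Finset.univ.filter (0 < g ·)).exists_min_image (fun i => a i / g i)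
    (by simpa [Finset.Nonempty] using hpos)
  have hgi₀ : 0 < g i₀ := (Finset.mem_filter.mp hi₀).2
  set t := a i₀ / g i₀
  have hle : ∀ i, t * g i ≤ a i := fun i => by
    rcases le_or_gt (g i) 0 with hgi | hgi
    · exact (mul_nonpos_of_nonneg_of_nonpos (div_nonneg (ha i₀) hgi₀.le) hgi).trans (ha i)
    · exact (le_div_iff₀ hgi).mp (hmin i (by simpa using hgi))
  refine ⟨t, fun i => by simpa using hle i, ssubset_of_subset_not_subset (fun i hi => ?_) ?_⟩
  · by_contra hai
    have hgi : g i = 0 := notMem_support.mp fun h => hai (hga h)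
    simp [hgi, notMem_support.mp hai] at hi
  · intro h
    have : i₀ ∈ support (a - t • g) := h (hga hgi₀.ne')
    simp [t, div_mul_cancel₀ _ hgi₀.ne'] at this

namespace PointedCone

variable {ι : Type*} [Fintype ι]

section Module

variable {E : Type*} [AddCommGroup E] [Module ℝ E]

lemma mem_hull_range_iff {v : ι → E} {x : E} :
    x ∈ hull ℝ (range v) ↔ ∃ a : ι → ℝ, 0 ≤ a ∧ ∑ i, a i • v i = x := by
  rw [Submodule.mem_span_range_iff_exists_fun]
  constructor
  · rintro ⟨c, rfl⟩
    exact ⟨fun i => c i, fun i => (c i).2, rfl⟩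
  · rintro ⟨a, ha, rfl⟩
    exact ⟨fun i => ⟨a i, ha i⟩, rfl⟩

theorem exists_linearIndepOn_mem_hull_image {v : ι → E} {x : E}
    (hx : x ∈ hull ℝ (range v)) : ∃ s : Set ι, LinearIndepOn ℝ v s ∧ x ∈ hull ℝ (v '' s) := by
  obtain ⟨a, ha, hax⟩ := mem_hull_range_iff.mp hx
  -- a representation of `x` with inclusion-minimal support is independent on that support
  obtain ⟨b, ⟨hb, hbx⟩, hmin⟩ := (InvImage.wf support wellFounded_lt).has_min
    {b | 0 ≤ b ∧ ∑ i, b i • v i = x} ⟨a, ha, hax⟩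
  refine ⟨support b, ?_, hbx ▸ Submodule.sum_mem _ fun i _ => ?_⟩
  · by_contra hdep
    obtain ⟨g, hgs, hgv, hg⟩ := linearDepOn_iff'.mp hdep
    obtain ⟨t, hbt, hsupp⟩ := exists_nonneg_sub_smul_support_ssubset hb
      (DFunLike.coe_injective.ne hg) (by rwa [Finsupp.fun_support_eq, ← Finsupp.mem_supported ℝ])
    refine hmin (b - t • ⇑g) ⟨hbt, ?_⟩ hsupp
    rw [Finsupp.linearCombination_apply, Finsupp.sum_fintype _ _ (by simp)] at hgv
    simp only [Pi.sub_apply, Pi.smul_apply, smul_eq_mul, sub_smul, mul_smul,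
      Finset.sum_sub_distrib, ← Finset.smul_sum, hgv, smul_zero, sub_zero, hbx]
  · by_cases hi : b i = 0
    · simp [hi]
    · exact smul_mem _ (hb i) (subset_hull (mem_image_of_mem v hi))

variable [TopologicalSpace E] [IsTopologicalAddGroup E] [ContinuousSMul ℝ E] [T2Space E]

lemma isClosed_hull_range_of_linearIndependent {v : ι → E} (hv : LinearIndependent ℝ v) :
    IsClosed (hull ℝ (range v) : Set E) := by
  have hcone : (hull ℝ (range v) : Set E) = Fintype.linearCombination ℝ v '' Ici 0 := by
    ext x
    simp [mem_hull_range_iff, Fintype.linearCombination_apply]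
  rw [hcone]
  exact (LinearMap.isClosedEmbedding_of_injective (LinearMap.ker_eq_bot.mpr
    hv.fintypeLinearCombination_injective)).isClosedMap _ isClosed_Ici

theorem isClosed_hull_range (v : ι → E) : IsClosed (hull ℝ (range v) : Set E) := by
  classical
  have hunion : (hull ℝ (range v) : Set E) =
      ⋃ (s : Set ι) (_ : LinearIndepOn ℝ v s), (hull ℝ (v '' s) : Set E) := by
    refine Subset.antisymm (fun x hx => ?_) (iUnion₂_subset fun s _ => ?_)
    · obtain ⟨s, hs, hxs⟩ := exists_linearIndepOn_mem_hull_image hx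
      exact mem_iUnion₂.mpr ⟨s, hs, hxs⟩
    · exact Submodule.span_mono (image_subset_range v s)
  rw [hunion]
  refine isClosed_iUnion_of_finite fun s => isClosed_iUnion_of_finite fun hs => ?_
  rw [image_eq_range]
  exact isClosed_hull_range_of_linearIndependent hs

end Module

variable {E : Type*} [NormedAddCommGroup E] [InnerProductSpace ℝ E] [FiniteDimensional ℝ E]

theorem mem_hull_range_of_forall_inner_nonneg {v : ι → E} {x : E}
    (h : ∀ z, (∀ i, 0 ≤ ⟪v i, z⟫) → 0 ≤ ⟪x, z⟫) : x ∈ hull ℝ (range v) := by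
  by_contra hx
  let C : ProperCone ℝ E := ⟨hull ℝ (range v), isClosed_hull_range v⟩
  obtain ⟨z, hCz, hxz⟩ := C.hyperplane_separation' hx
  exact hxz.not_ge (h z fun i => hCz (v i) (subset_hull (mem_range_self i)))

end PointedCone

theorem Submodule.exists_nonneg_add_sum_smul_mem_orthogonal {ι E : Type*} [Fintype ι]
    [NormedAddCommGroup E] [InnerProductSpace ℝ E] [FiniteDimensional ℝ E]
    (V : Submodule ℝ E) (u : ι → E) (c : E) (h : ∀ x ∈ V, (∀ i, 0 ≤ ⟪u i, x⟫) → ⟪c, x⟫ ≤ 0) :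
    ∃ a : ι → ℝ, 0 ≤ a ∧ c + ∑ i, a i • u i ∈ Vᗮ := by
  have hPc : -V.starProjection c ∈ PointedCone.hull ℝ (range (V.starProjection ∘ u)) := by
    refine PointedCone.mem_hull_range_of_forall_inner_nonneg fun z hz => ?_
    have := h _ (V.starProjection_apply_mem z) fun i =>
      V.inner_starProjection_left_eq_right (u i) z ▸ hz i
    rw [inner_neg_left, V.inner_starProjection_left_eq_right]
    linarith
  obtain ⟨a, ha, hac⟩ := PointedCone.mem_hull_range_iff.mp hPc
  refine ⟨a, ha, V.starProjection_apply_eq_zero_iff.mp ?_⟩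
  simp only [comp_apply] at hac
  simp [map_sum, hac]

namespace EuclideanSpace

variable {ι : Type*} [Fintype ι] {σ : ι → ℝ}

lemma inner_nonpos_of_sign_pattern (hσ : ∀ i, σ i ≠ 0) {x y : EuclideanSpace ℝ ι}
    (hx : ∀ i, 0 ≤ σ i * x i) (hy : ∀ i, σ i * y i ≤ 0) : ⟪y, x⟫ ≤ 0 := by
  rw [PiLp.inner_apply]
  refine Finset.sum_nonpos fun i _ => ?_
  have hσi : 0 < σ i ^ 2 := pow_two_pos_of_ne_zero (hσ i)
  have := mul_nonpos_of_nonpos_of_nonneg (hy i) (hx i)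
  rw [RCLike.inner_apply, conj_trivial]
  nlinarith

theorem exists_sub_mem_orthogonal_sign_pattern [DecidableEq ι]
    (V : Submodule ℝ (EuclideanSpace ℝ ι)) (c : EuclideanSpace ℝ ι)
    (h : ∀ x ∈ V, (∀ i, 0 ≤ σ i * x i) → ⟪c, x⟫ ≤ 0) :
    ∃ y : EuclideanSpace ℝ ι, y - c ∈ Vᗮ ∧ ∀ i, σ i * y i ≤ 0 := by
  obtain ⟨a, ha, hac⟩ := V.exists_nonneg_add_sum_smul_mem_orthogonal (fun i => single i (σ i)) c
    (by simpa [inner_single_left] using h)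
  refine ⟨-∑ i, a i • single i (σ i), ?_, fun i => ?_⟩
  · simpa [neg_add_rev, ← sub_eq_add_neg] using Vᗮ.neg_mem hac
  · simpa [Pi.single_apply, mul_left_comm] using mul_nonneg (ha i) (mul_self_nonneg (σ i))

theorem inner_nonpos_of_sub_mem_orthogonal_sign_pattern (hσ : ∀ i, σ i ≠ 0)
    {V : Submodule ℝ (EuclideanSpace ℝ ι)} {c y : EuclideanSpace ℝ ι} (hyc : y - c ∈ Vᗮ)
    (hy : ∀ i, σ i * y i ≤ 0) {x : EuclideanSpace ℝ ι} (hxV : x ∈ V)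
    (hx : ∀ i, 0 ≤ σ i * x i) : ⟪c, x⟫ ≤ 0 := by
  have horth : ⟪y - c, x⟫ = 0 := Submodule.inner_left_of_mem_orthogonal hxV hyc
  rw [inner_sub_left] at horth
  linarith [inner_nonpos_of_sign_pattern hσ hx hy]

end EuclideanSpace

lemma bddAbove_image_iff_forall_nonpos {M : Type*} [AddCommGroup M] [Module ℝ M]
    (f : M →ₗ[ℝ] ℝ) {K : Set M} (hK : ∀ x ∈ K, ∀ t : ℝ, 0 ≤ t → t • x ∈ K) :
    BddAbove (f '' K) ↔ ∀ x ∈ K, f x ≤ 0 := by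
  refine ⟨fun ⟨b, hb⟩ x hx => ?_, fun h => ⟨0, forall_mem_image.mpr h⟩⟩
  by_contra! hfx
  have := hb (mem_image_of_mem f (hK x hx ((|b| + 1) / f x) (by positivity)))
  rw [map_smul, smul_eq_mul, div_mul_cancel₀ _ hfx.ne'] at this
  linarith [le_abs_self b]

/-- (Linear programming / Farkas duality for sign-vector cones.)
Let `V ⊆ ℝⁿ` be a linear subspace, `σ ∈ {±1}ⁿ` a sign vector, `c ∈ ℝⁿ`, and
`K_σ = { x ∈ V | σᵢ xᵢ ≥ 0 ∀ i }`.  Then `x ↦ ⟨c, x⟩` is bounded above on `K_σ` iff there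
is `y ∈ c + V^⊥` with `σᵢ yᵢ ≤ 0` for all `i`; moreover boundedness above on the cone is
equivalent to `⟨c, x⟩ ≤ 0` for all `x ∈ K_σ`. -/
theorem statement8 (n : ℕ) (V : Submodule ℝ (EuclideanSpace ℝ (Fin n)))
    (σ : Fin n → ℝ) (hσ : ∀ i, σ i = 1 ∨ σ i = -1)
    (c : EuclideanSpace ℝ (Fin n)) :
    (BddAbove ((fun x => ⟪c, x⟫) ''
        {x : EuclideanSpace ℝ (Fin n) | x ∈ V ∧ ∀ i, 0 ≤ σ i * x i}) ↔
      ∃ y : EuclideanSpace ℝ (Fin n), y - c ∈ Vᗮ ∧ ∀ i, σ i * y i ≤ 0) ∧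
    (BddAbove ((fun x => ⟪c, x⟫) ''
        {x : EuclideanSpace ℝ (Fin n) | x ∈ V ∧ ∀ i, 0 ≤ σ i * x i}) ↔
      ∀ x : EuclideanSpace ℝ (Fin n), x ∈ V → (∀ i, 0 ≤ σ i * x i) → ⟪c, x⟫ ≤ 0) := by
  have hσ₀ : ∀ i, σ i ≠ 0 := fun i => by rcases hσ i with h | h <;> simp [h]
  set K := {x : EuclideanSpace ℝ (Fin n) | x ∈ V ∧ ∀ i, 0 ≤ σ i * x i}
  have hK : ∀ x ∈ K, ∀ t : ℝ, 0 ≤ t → t • x ∈ K := fun x ⟨hxV, hx⟩ t ht =>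
    ⟨V.smul_mem t hxV, fun i => by simpa [mul_left_comm] using mul_nonneg ht (hx i)⟩
  have hbdd : BddAbove ((fun x => ⟪c, x⟫) '' K) ↔
      ∀ x ∈ V, (∀ i, 0 ≤ σ i * x i) → ⟪c, x⟫ ≤ 0 :=
    (bddAbove_image_iff_forall_nonpos (innerₗ _ c) hK).trans (by simp [K, and_imp])
  refine ⟨hbdd.trans ⟨EuclideanSpace.exists_sub_mem_orthogonal_sign_pattern V c, ?_⟩, hbdd⟩
  rintro ⟨y, hyc, hy⟩ x hxV hx
  exact EuclideanSpace.inner_nonpos_of_sub_mem_orthogonal_sign_pattern hσ₀ hyc hy hxV hx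
end

section
/- Let k be a field and let A be a differential graded algebra over k equipped with an additional 'weight' grading: A = ⊕_{n,w ∈ ℤ} A^{n,w}, where n is the cohomological degree, the differential d has bidegree (1, 0), and multiplication is additive in both degrees. Suppose the cohomology is pure: for every n, H^n(A) is concentrated in weight n (i.e. the cohomology of the complex (A^{•,w}, d) vanishes in cohomological degree n unless w = n). Then A is formal: there is a zig-zag of quasi-isomorphisms of dg-algebras connecting A to its cohomology H*(A) with zero differential. In fact the bigraded subspace C ⊆ A with C^n = (A^{n,n} ∩ ker d) ⊕ ⊕_{w > n} A^{n,w} is a sub-dg-algebra, and the inclusion C ↪ A and the projection C → H*(A) are both quasi-isomorphisms of dg-algebras. -/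
/-!
`Cⁿ = (A^{n,n} ∩ ker d) ⊕ ⊕_{w > n} A^{n,w}` is spanned by bihomogeneous elements of weight
`≥` degree that are cocycles when weight equals degree. These are closed under products (weights
add, and a product has weight equal to degree only if both factors do) and under `d`, which
preserves weight. Because `d` preserves weight, every bihomogeneous component of a cocycle is a
cocycle. By purity, the components of weight `≠ n` of a degree-`n` cocycle are coboundaries, so
dropping those of weight `< n` lands in `C`. Conversely, the components of weight `< n` of a
primitive of an element of `C` are cocycles, their boundaries being vanishing components of that
element, so dropping them leaves a primitive in `C`.
-/

open DirectSum

section Decomposition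

variable {ι R M : Type*} [DecidableEq ι] [Semiring R] [AddCommMonoid M] [Module R M]
  (ℳ : ι → Submodule R M) [Decomposition ℳ]

theorem mem_of_forall_decompose_mem {N : Submodule R M} {x : M}
    (h : ∀ i, (decompose ℳ x i : M) ∈ N) : x ∈ N := by
  classical
  rw [← sum_support_decompose ℳ x]
  exact N.sum_mem fun i _ => h i

theorem decompose_eq_zero_of_mem_iSup {κ : Type*} (f : κ → ι) {x : M}
    (hx : x ∈ ⨆ j, ℳ (f j)) {i : ι} (hi : ∀ j, f j ≠ i) : (decompose ℳ x i : M) = 0 := by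
  induction hx using Submodule.iSup_induction' with
  | mem j y hy => exact decompose_of_mem_ne ℳ hy (hi j)
  | zero => simp
  | add y z _ _ hy hz => simp [hy, hz]

theorem decompose_map_add_apply [Add ι] [IsRightCancelAdd ι] {F : Type*} [FunLike F M M]
    [AddMonoidHomClass F M M] (d : F) (δ : ι) (hd : ∀ i, ∀ x ∈ ℳ i, d x ∈ ℳ (i + δ))
    (x : M) (i : ι) : (decompose ℳ (d x) (i + δ) : M) = d (decompose ℳ x i) := by
  induction x using Decomposition.inductionOn ℳ with
  | zero => simp
  | @homogeneous j y =>
    by_cases hji : j = i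
    · subst hji
      rw [decompose_of_mem_same ℳ (hd j y y.2), decompose_coe, of_eq_same]
    · rw [decompose_of_mem_ne ℳ (hd j y y.2) (fun h => hji (add_right_cancel h))]
      simp [of_apply, hji]
  | add y z hy hz => simp [hy, hz]

end Decomposition

section Bigraded

variable {R M : Type*} [Ring R] [AddCommGroup M] [Module R M]
  (𝒜 : ℤ × ℤ → Submodule R M) (d : M →ₗ[R] M)

def degreePart (n : ℤ) : Submodule R M :=
  ⨆ w : ℤ, 𝒜 (n, w)

def pureTruncation (n : ℤ) : Submodule R M :=
  (𝒜 (n, n) ⊓ LinearMap.ker d) ⊔ ⨆ w : ℤ, ⨆ _ : n < w, 𝒜 (n, w)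

def pureTruncationGenerators (n : ℤ) : Set M :=
  {x | ∃ w, n ≤ w ∧ x ∈ 𝒜 (n, w) ∧ (w = n → d x = 0)}

variable {𝒜 d}

theorem mem_degreePart {n w : ℤ} {x : M} (hx : x ∈ 𝒜 (n, w)) : x ∈ degreePart 𝒜 n :=
  Submodule.mem_iSup_of_mem w hx

theorem mem_pureTruncation_of_le {n w : ℤ} {x : M} (hw : n ≤ w) (hx : x ∈ 𝒜 (n, w))
    (hdx : w = n → d x = 0) : x ∈ pureTruncation 𝒜 d n := by
  rcases hw.eq_or_lt with rfl | hw
  · exact Submodule.mem_sup_left ⟨hx, hdx rfl⟩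
  · exact Submodule.mem_sup_right (Submodule.mem_iSup_of_mem w (Submodule.mem_iSup_of_mem hw hx))

theorem pureTruncation_le_span (n : ℤ) :
    pureTruncation 𝒜 d n ≤ Submodule.span R (pureTruncationGenerators 𝒜 d n) :=
  sup_le (fun _ ⟨hx, hdx⟩ => Submodule.subset_span ⟨n, le_rfl, hx, fun _ => hdx⟩)
    (iSup₂_le fun w hw _ hx =>
      Submodule.subset_span ⟨w, hw.le, hx, fun h => absurd h hw.ne'⟩)

theorem pureTruncation_le_degreePart (n : ℤ) : pureTruncation 𝒜 d n ≤ degreePart 𝒜 n :=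
  sup_le (inf_le_left.trans (le_iSup (fun w => 𝒜 (n, w)) n))
    (iSup₂_le fun w _ => le_iSup (fun w => 𝒜 (n, w)) w)

theorem map_mem_pureTruncation (hd : ∀ n w : ℤ, ∀ a ∈ 𝒜 (n, w), d a ∈ 𝒜 (n + 1, w))
    (hdd : ∀ a : M, d (d a) = 0) {n : ℤ} {c : M} (hc : c ∈ pureTruncation 𝒜 d n) :
    d c ∈ pureTruncation 𝒜 d (n + 1) := by
  suffices pureTruncationGenerators 𝒜 d n ⊆ (pureTruncation 𝒜 d (n + 1)).comap d from
    Submodule.span_le.mpr this (pureTruncation_le_span n hc)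
  rintro x ⟨w, hnw, hx, hdx⟩
  rcases hnw.eq_or_lt with rfl | hnw
  · simp [hdx rfl]
  · exact mem_pureTruncation_of_le hnw (hd n w x hx) fun _ => hdd x

variable [Decomposition 𝒜]

theorem decompose_eq_zero_of_mem_degreePart {n m w : ℤ} {x : M} (hx : x ∈ degreePart 𝒜 n)
    (hm : m ≠ n) : (decompose 𝒜 x (m, w) : M) = 0 :=
  decompose_eq_zero_of_mem_iSup 𝒜 (fun w => (n, w)) hx fun _ h => hm (congrArg Prod.fst h).symm

theorem decompose_eq_zero_of_mem_pureTruncation {n w : ℤ} {c : M}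
    (hc : c ∈ pureTruncation 𝒜 d n) (hw : w < n) : (decompose 𝒜 c (n, w) : M) = 0 := by
  obtain ⟨x, ⟨hx, -⟩, y, hy, rfl⟩ := Submodule.mem_sup.mp hc
  rw [iSup_subtype'] at hy
  rw [decompose_add, DirectSum.add_apply, Submodule.coe_add,
    decompose_of_mem_ne 𝒜 hx (by simp [hw.ne']),
    decompose_eq_zero_of_mem_iSup 𝒜 (fun w' : {w' // n < w'} => (n, w'.1)) hy
      (fun w' h => by simp only [Prod.mk.injEq, true_and] at h; exact (hw.trans w'.2).ne' h),
    zero_add]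

theorem decompose_map_apply (hd : ∀ n w : ℤ, ∀ a ∈ 𝒜 (n, w), d a ∈ 𝒜 (n + 1, w))
    (x : M) (n w : ℤ) : (decompose 𝒜 (d x) (n + 1, w) : M) = d (decompose 𝒜 x (n, w)) := by
  have hshift : ((n, w) + (1, 0) : ℤ × ℤ) = (n + 1, w) := by simp
  rw [← hshift]
  exact decompose_map_add_apply 𝒜 d (1, 0) (fun ⟨n, w⟩ a ha => by simpa using hd n w a ha) x (n, w)

theorem map_decompose_eq_zero (hd : ∀ n w : ℤ, ∀ a ∈ 𝒜 (n, w), d a ∈ 𝒜 (n + 1, w))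
    {x : M} (hx : d x = 0) (n w : ℤ) : d (decompose 𝒜 x (n, w)) = 0 := by
  rw [← decompose_map_apply hd, hx, decompose_zero, DirectSum.zero_apply, ZeroMemClass.coe_zero]

theorem mem_sup_map_degreePart_of_cocycle
    (hd : ∀ n w : ℤ, ∀ a ∈ 𝒜 (n, w), d a ∈ 𝒜 (n + 1, w))
    (hpure : ∀ n w : ℤ, w ≠ n → ∀ a ∈ 𝒜 (n, w), d a = 0 → ∃ b ∈ 𝒜 (n - 1, w), d b = a)
    {n : ℤ} {a : M} (ha : a ∈ degreePart 𝒜 n) (hda : d a = 0) :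
    a ∈ pureTruncation 𝒜 d n ⊔ (degreePart 𝒜 (n - 1)).map d := by
  refine mem_of_forall_decompose_mem 𝒜 fun ⟨m, w⟩ => ?_
  rcases eq_or_ne m n with rfl | hm
  · have hcl := map_decompose_eq_zero hd hda m w
    rcases lt_or_ge w m with hw | hw
    · obtain ⟨b, hb, hdb⟩ := hpure m w hw.ne _ (Submodule.coe_mem _) hcl
      exact Submodule.mem_sup_right ⟨b, mem_degreePart hb, hdb⟩
    · exact Submodule.mem_sup_left (mem_pureTruncation_of_le hw (Submodule.coe_mem _) fun _ => hcl)
  · rw [decompose_eq_zero_of_mem_degreePart ha hm]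
    exact zero_mem _

theorem mem_map_pureTruncation_of_mem_map_degreePart
    (hd : ∀ n w : ℤ, ∀ a ∈ 𝒜 (n, w), d a ∈ 𝒜 (n + 1, w))
    {n : ℤ} {c : M} (hc : c ∈ pureTruncation 𝒜 d n) (hcA : c ∈ (degreePart 𝒜 (n - 1)).map d) :
    c ∈ (pureTruncation 𝒜 d (n - 1)).map d := by
  obtain ⟨b, hb, rfl⟩ := hcA
  show b ∈ ((pureTruncation 𝒜 d (n - 1)).map d).comap d
  refine mem_of_forall_decompose_mem 𝒜 fun ⟨m, w⟩ => ?_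
  rcases eq_or_ne m (n - 1) with rfl | hm
  · rcases lt_or_ge w n with hw | hw
    · have h := decompose_map_apply hd b (n - 1) w
      rw [sub_add_cancel, decompose_eq_zero_of_mem_pureTruncation hc hw] at h
      simp [← h]
    · exact Submodule.mem_map_of_mem <| mem_pureTruncation_of_le (by omega)
        (Submodule.coe_mem _) fun h => by omega
  · rw [decompose_eq_zero_of_mem_degreePart hb hm]
    exact zero_mem _

theorem mem_map_pureTruncation_of_decompose_mem_map
    (hd : ∀ n w : ℤ, ∀ a ∈ 𝒜 (n, w), d a ∈ 𝒜 (n + 1, w))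
    (hpure : ∀ n w : ℤ, w ≠ n → ∀ a ∈ 𝒜 (n, w), d a = 0 → ∃ b ∈ 𝒜 (n - 1, w), d b = a)
    {n : ℤ} {c : M} (hc : c ∈ pureTruncation 𝒜 d n) (hdc : d c = 0)
    (hcA : (decompose 𝒜 c (n, n) : M) ∈ (degreePart 𝒜 (n - 1)).map d) :
    c ∈ (pureTruncation 𝒜 d (n - 1)).map d := by
  refine mem_of_forall_decompose_mem 𝒜 fun ⟨m, w⟩ => ?_
  rcases eq_or_ne m n with rfl | hm
  · have hcl := map_decompose_eq_zero hd hdc m w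
    rcases lt_trichotomy w m with hw | rfl | hw
    · rw [decompose_eq_zero_of_mem_pureTruncation hc hw]
      exact zero_mem _
    · exact mem_map_pureTruncation_of_mem_map_degreePart hd
        (mem_pureTruncation_of_le le_rfl (Submodule.coe_mem _) fun _ => hcl) hcA
    · obtain ⟨b, hb, hdb⟩ := hpure m w hw.ne' _ (Submodule.coe_mem _) hcl
      exact ⟨b, mem_pureTruncation_of_le (by omega) hb fun h => by omega, hdb⟩
  · rw [decompose_eq_zero_of_mem_degreePart (pureTruncation_le_degreePart n hc) hm]
    exact zero_mem _

end Bigraded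

section Multiplicative

open scoped Pointwise

variable {R A : Type*} [CommRing R] [Ring A] [Algebra R A]
  {𝒜 : ℤ × ℤ → Submodule R A} [SetLike.GradedMonoid 𝒜] {d : A →ₗ[R] A}

theorem map_one_eq_zero_of_leibniz
    (hleib : ∀ n w : ℤ, ∀ a ∈ 𝒜 (n, w), ∀ b : A,
      d (a * b) = d a * b + (if Even n then a * d b else -(a * d b))) :
    d 1 = 0 := by
  simpa using hleib 0 0 1 SetLike.GradedOne.one_mem 1

theorem mul_mem_pureTruncation
    (hleib : ∀ n w : ℤ, ∀ a ∈ 𝒜 (n, w), ∀ b : A,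
      d (a * b) = d a * b + (if Even n then a * d b else -(a * d b)))
    {m n : ℤ} {a b : A} (ha : a ∈ pureTruncation 𝒜 d m) (hb : b ∈ pureTruncation 𝒜 d n) :
    a * b ∈ pureTruncation 𝒜 d (m + n) := by
  suffices pureTruncationGenerators 𝒜 d m * pureTruncationGenerators 𝒜 d n ⊆
      (pureTruncation 𝒜 d (m + n) : Set A) by
    have hab := Submodule.mul_mem_mul (pureTruncation_le_span m ha) (pureTruncation_le_span n hb)
    rw [Submodule.span_mul_span] at hab
    exact Submodule.span_le.mpr this hab
  rintro _ ⟨x, ⟨w, hmw, hx, hdx⟩, y, ⟨w', hnw', hy, hdy⟩, rfl⟩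
  refine mem_pureTruncation_of_le (add_le_add hmw hnw') (SetLike.GradedMul.mul_mem hx hy)
    fun h => ?_
  rw [hleib m w x hx y, hdx (by omega), hdy (by omega)]
  simp

end Multiplicative

/-- (Purity implies formality.)  Let `A` be a dg-algebra over a field
`k` with an extra weight grading `A = ⊕_{n,w} A^{n,w}` (cohomological degree `n`, weight
`w`), differential `d` of bidegree `(1,0)` satisfying the signed Leibniz rule, and suppose
the cohomology is pure: the complex `(A^{•,w}, d)` is exact in cohomological degree `n`
unless `w = n`.  Then the bigraded subspace `C` with
`Cⁿ = (A^{n,n} ∩ ker d) ⊕ ⊕_{w > n} A^{n,w}` is a sub-dg-algebra of `A`, the inclusion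
`C ↪ A` is a quasi-isomorphism, and the projection `C → H*(A)` (taking the weight-`n`
component in degree `n`) is a quasi-isomorphism; hence `A` is formal. -/
theorem statement15 {k A : Type*} [Field k] [Ring A] [Algebra k A]
    (𝒜 : ℤ × ℤ → Submodule k A) [GradedAlgebra 𝒜]
    (d : A →ₗ[k] A)
    (hd : ∀ n w : ℤ, ∀ a ∈ 𝒜 (n, w), d a ∈ 𝒜 (n + 1, w))
    (hdd : ∀ a : A, d (d a) = 0)
    (hleib : ∀ n w : ℤ, ∀ a ∈ 𝒜 (n, w), ∀ b : A,
      d (a * b) = d a * b + (if Even n then a * d b else -(a * d b)))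
    (hpure : ∀ n w : ℤ, w ≠ n → ∀ a ∈ 𝒜 (n, w), d a = 0 →
      ∃ b ∈ 𝒜 (n - 1, w), d b = a)
    -- `C` in cohomological degree `n`, and the full degree-`n` part of `A`:
    (Csub An : ℤ → Submodule k A)
    (hCsub : ∀ n : ℤ,
      Csub n = (𝒜 (n, n) ⊓ LinearMap.ker d) ⊔ ⨆ w : ℤ, ⨆ _ : n < w, 𝒜 (n, w))
    (hAn : ∀ n : ℤ, An n = ⨆ w : ℤ, 𝒜 (n, w)) :
    -- (a) `C` is a subalgebra ...
    ((1 : A) ∈ Csub 0 ∧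
      ∀ m n : ℤ, ∀ a ∈ Csub m, ∀ b ∈ Csub n, a * b ∈ Csub (m + n)) ∧
    -- ... closed under the differential, i.e. a sub-dg-algebra:
    (∀ n : ℤ, ∀ a ∈ Csub n, d a ∈ Csub (n + 1)) ∧
    -- (b) the inclusion `C ↪ A` is a quasi-isomorphism: surjective on cohomology ...
    (∀ n : ℤ, ∀ a ∈ An n, d a = 0 → ∃ c ∈ Csub n, ∃ b ∈ An (n - 1), a = c + d b) ∧
    -- ... and injective on cohomology:
    (∀ n : ℤ, ∀ c ∈ Csub n, d c = 0 → (∃ b ∈ An (n - 1), c = d b) →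
      ∃ b' ∈ Csub (n - 1), c = d b') ∧
    -- (c) the projection `C → H*(A)`, `c ↦ [weight-n component of c]`, is a
    -- quasi-isomorphism: surjective on cohomology ...
    (∀ n : ℤ, ∀ z ∈ 𝒜 (n, n), d z = 0 → ∃ c ∈ Csub n, d c = 0 ∧
      ∃ b ∈ An (n - 1), z - ((DirectSum.decompose 𝒜 c (n, n) : 𝒜 (n, n)) : A) = d b) ∧
    -- ... and injective on cohomology:
    (∀ n : ℤ, ∀ c ∈ Csub n, d c = 0 →
      (∃ b ∈ An (n - 1), ((DirectSum.decompose 𝒜 c (n, n) : 𝒜 (n, n)) : A) = d b) →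
      ∃ b' ∈ Csub (n - 1), c = d b') := by
  obtain rfl : Csub = pureTruncation 𝒜 d := funext hCsub
  obtain rfl : An = degreePart 𝒜 := funext hAn
  refine ⟨⟨mem_pureTruncation_of_le le_rfl SetLike.GradedOne.one_mem
      fun _ => map_one_eq_zero_of_leibniz hleib,
    fun m n a ha b hb => mul_mem_pureTruncation hleib ha hb⟩,
    fun n a ha => map_mem_pureTruncation hd hdd ha, ?_, ?_, ?_, ?_⟩
  · intro n a ha hda
    obtain ⟨c, hc, _, ⟨b, hb, rfl⟩, rfl⟩ :=
      Submodule.mem_sup.mp (mem_sup_map_degreePart_of_cocycle hd hpure ha hda)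
    exact ⟨c, hc, b, hb, rfl⟩
  · rintro n c hc - ⟨b, hb, rfl⟩
    obtain ⟨b', hb', h⟩ := mem_map_pureTruncation_of_mem_map_degreePart hd hc ⟨b, hb, rfl⟩
    exact ⟨b', hb', h.symm⟩
  · intro n z hz hdz
    refine ⟨z, mem_pureTruncation_of_le le_rfl hz fun _ => hdz, hdz, 0, zero_mem _, ?_⟩
    rw [decompose_of_mem_same 𝒜 hz, sub_self, map_zero]
  · rintro n c hc hdc ⟨b, hb, hcb⟩
    obtain ⟨b', hb', h⟩ :=
      mem_map_pureTruncation_of_decompose_mem_map hd hpure hc hdc ⟨b, hb, hcb.symm⟩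
    exact ⟨b', hb', h.symm⟩
end
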